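/- arXiv:math/0307139 — 2 statements merged into one kernel-verified Lean document; each statement's English description precedes it below -/
import Mathlib

section
/- Let T be a unital associative ℂ-algebra, I ⊆ T a nilpotent two-sided ideal, and π : T → T/I the quotient map. Suppose u, v ∈ T/I satisfy u⁴ = 1, v⁶ = 1 and u² = v³. Then there exist û, v̂ ∈ T with π(û) = u, π(v̂) = v, û⁴ = 1, v̂⁶ = 1 and û² = v̂³. (This expresses the formal smoothness of the group algebra ℂ[SL₂(ℤ)] = ℂℤ₄ ∗_{ℂℤ₂} ℂℤ₆ of the modular group, an amalgamated coproduct of semisimple algebras.) -/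
/-!
Since `X⁴ - 1` and `X⁶ - 1` are separable over `ℂ`, Newton iteration in the commutative
subalgebra generated by a preimage lifts `u` and `v` separately to `û, v₀ ∈ T` with `û⁴ = 1` and
`v₀⁶ = 1`. The involutions `e = û²` and `f = v₀³` agree modulo the nilpotent ideal, so
`z = (1 + e f) / 2` is a unit with `z f = e z`; then `v̂ = z v₀ z⁻¹` satisfies `v̂³ = e = û²`.
-/

/-- The kernel of `π` (a two-sided ideal) is nilpotent: there is `k ≥ 1` such that
every product of `k` elements of the kernel is zero. -/
def NilpotentKernel {T R : Type*} [Ring T] [Ring R] (π : T →+* R) : Prop :=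
  ∃ k : ℕ, 1 ≤ k ∧ ∀ l : List T, l.length = k → (∀ x ∈ l, π x = 0) → l.prod = 0

open Polynomial Algebra

namespace Polynomial.Separable

section CommRing

variable {K S : Type*} [CommRing K] [CommRing S] [Algebra K S] {P : K[X]}

theorem isUnit_aeval_derivative (hP : P.Separable) {x : S} (hx : IsNilpotent (aeval x P)) :
    IsUnit (aeval x (derivative P)) := by
  obtain ⟨A, B, h⟩ := hP
  have h' : aeval x B * aeval x (derivative P) = 1 - aeval x A * aeval x P := by
    rw [eq_sub_iff_add_eq', ← map_mul, ← map_mul, ← map_add, h, map_one]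
  exact isUnit_of_mul_isUnit_right
    (h' ▸ ((Commute.all _ _).isNilpotent_mul_left hx).isUnit_one_sub)

theorem eq_of_isNilpotent_sub (hP : P.Separable) {x y : S} (hx : aeval x P = 0)
    (hy : aeval y P = 0) (hxy : IsNilpotent (x - y)) : x = y :=
  (existsUnique_nilpotent_sub_and_aeval_eq_zero (hx ▸ IsNilpotent.zero)
    (hP.isUnit_aeval_derivative (hx ▸ IsNilpotent.zero))).unique
    ⟨by rw [sub_self]; exact IsNilpotent.zero, hx⟩ ⟨hxy, hy⟩

end CommRing

variable {K T R : Type*} [CommRing K] [Ring T] [Ring R] [Algebra K T] [Algebra K R] {P : K[X]}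

theorem exists_mem_adjoin_isNilpotent_sub_aeval_eq_zero (hP : P.Separable) {a : T}
    (ha : IsNilpotent (aeval a P)) :
    ∃ b ∈ adjoin K {a}, IsNilpotent (a - b) ∧ aeval b P = 0 := by
  set x : adjoin K {a} := ⟨a, self_mem_adjoin_singleton K a⟩
  have hx : IsNilpotent (aeval x P) := by
    rwa [← IsNilpotent.map_iff (f := (adjoin K {a}).val) Subtype.val_injective,
      ← aeval_algHom_apply]
  obtain ⟨⟨b, hb⟩, ⟨hxb, hbP⟩, -⟩ :=
    existsUnique_nilpotent_sub_and_aeval_eq_zero hx (hP.isUnit_aeval_derivative hx)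
  refine ⟨b, hb, ?_, ?_⟩
  · simpa using hxb.map (adjoin K {a}).val
  · simpa [aeval_algHom_apply] using congrArg (adjoin K {a}).val hbP

theorem exists_lift_aeval_eq_zero (π : T →ₐ[K] R) (hsurj : Function.Surjective π)
    (hπ : ∀ x, π x = 0 → IsNilpotent x) (hP : P.Separable) {u : R} (hu : aeval u P = 0) :
    ∃ b, π b = u ∧ aeval b P = 0 := by
  obtain ⟨a, rfl⟩ := hsurj u
  obtain ⟨b, hb, hab, hbP⟩ :=
    hP.exists_mem_adjoin_isNilpotent_sub_aeval_eq_zero (hπ _ (by rw [← aeval_algHom_apply, hu]))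
  have hπb : π b ∈ adjoin K {π a} := by
    rw [← Set.image_singleton, adjoin_image]
    exact Subalgebra.mem_map.2 ⟨b, hb, rfl⟩
  let ι := (adjoin K {π a}).val
  have hι : Function.Injective ι := Subtype.val_injective
  have hab' : (⟨π a, self_mem_adjoin_singleton K _⟩ : adjoin K {π a}) = ⟨π b, hπb⟩ := by
    refine hP.eq_of_isNilpotent_sub (hι ?_) (hι ?_) ?_
    · simpa [ι, aeval_algHom_apply] using hu
    · simp [ι, aeval_algHom_apply, hbP]
    · rw [← IsNilpotent.map_iff hι]
      simpa [ι] using hab.map π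
  exact ⟨b, (congrArg Subtype.val hab').symm, hbP⟩

end Polynomial.Separable

theorem exists_lift_pow_eq_one {K T R : Type*} [Field K] [Ring T] [Ring R] [Algebra K T]
    [Algebra K R] (π : T →ₐ[K] R) (hsurj : Function.Surjective π)
    (hπ : ∀ x, π x = 0 → IsNilpotent x) {n : ℕ} (hn : (n : K) ≠ 0) {u : R} (hu : u ^ n = 1) :
    ∃ b, π b = u ∧ b ^ n = 1 := by
  simpa [sub_eq_zero] using
    (separable_X_pow_sub_C (1 : K) hn one_ne_zero).exists_lift_aeval_eq_zero π hsurj hπ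
      (u := u) (by simp [hu])

theorem exists_unit_conj_eq_of_mul_self_eq_one {F T R : Type*} [Ring T] [Ring R]
    [Invertible (2 : T)] [FunLike F T R] [RingHomClass F T R] (π : F)
    (hπ : ∀ x, π x = 0 → IsNilpotent x) {e f : T} (he : e * e = 1) (hf : f * f = 1)
    (hef : π e = π f) : ∃ z : Tˣ, π z = 1 ∧ (z : T) * f * ↑z⁻¹ = e := by
  set z := ⅟2 * (1 + e * f)
  have hπz : π z = 1 := by
    rw [map_mul, map_add, map_one, map_mul, hef, ← map_mul, hf, map_one, one_add_one_eq_two,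
      ← map_ofNat π 2, ← map_mul, invOf_mul_self, map_one]
  have hz : IsUnit z := by
    simpa using (hπ (z - 1) (by rw [map_sub, hπz, map_one, sub_self])).isUnit_one_add
  have hzf : z * f = e * z :=
    calc z * f = ⅟2 * (f + e * (f * f)) := by simp only [z, mul_assoc, add_mul, one_mul]
      _ = ⅟2 * (e + e * e * f) := by rw [hf, he, mul_one, one_mul, add_comm]
      _ = ⅟2 * (e * (1 + e * f)) := by rw [mul_add e, mul_one, mul_assoc]
      _ = e * z := by rw [← mul_assoc, ((Commute.ofNat_left 2 e).invOf_left).eq, mul_assoc]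
  refine ⟨hz.unit, hπz, ?_⟩
  rw [IsUnit.unit_spec, hzf, mul_assoc, hz.mul_val_inv, mul_one]

theorem NilpotentKernel.isNilpotent {T R : Type*} [Ring T] [Ring R] {π : T →+* R}
    (h : NilpotentKernel π) {x : T} (hx : π x = 0) : IsNilpotent x := by
  obtain ⟨k, -, hk⟩ := h
  exact ⟨k, by simpa using hk (List.replicate k x) (by simp) (by simp [hx])⟩

/-- Formal smoothness of `ℂ[SL₂(ℤ)] = ℂℤ₄ ∗_{ℂℤ₂} ℂℤ₆`: given a `ℂ`-algebra `T`, a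
nilpotent two-sided ideal `I ⊆ T` with quotient map `π : T → T/I` (encoded as a
surjective algebra map with nilpotent kernel), and `u, v ∈ T/I` with `u⁴ = 1`,
`v⁶ = 1`, `u² = v³`, there are lifts `uhat, vhat ∈ T` satisfying the same relations. -/
theorem sl2z_group_algebra_formally_smooth
    (T R : Type) [Ring T] [Algebra ℂ T] [Ring R] [Algebra ℂ R]
    (π : T →ₐ[ℂ] R) (hπ : Function.Surjective π) (hnil : NilpotentKernel (π : T →+* R))
    (u v : R) (hu : u ^ 4 = 1) (hv : v ^ 6 = 1) (huv : u ^ 2 = v ^ 3) :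
    ∃ uhat vhat : T, π uhat = u ∧ π vhat = v ∧
      uhat ^ 4 = 1 ∧ vhat ^ 6 = 1 ∧ uhat ^ 2 = vhat ^ 3 := by
  have hker : ∀ x, π x = 0 → IsNilpotent x := fun _ => hnil.isNilpotent
  obtain ⟨uhat, rfl, hu4⟩ := exists_lift_pow_eq_one π hπ hker (n := 4) (by norm_num) hu
  obtain ⟨w, rfl, hw6⟩ := exists_lift_pow_eq_one π hπ hker (n := 6) (by norm_num) hv
  let _ : Invertible (2 : T) := (invertibleTwo.map (algebraMap ℂ T)).copy 2 (map_ofNat _ 2).symm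
  obtain ⟨z, hz, hconj⟩ := exists_unit_conj_eq_of_mul_self_eq_one π hker
    (e := uhat ^ 2) (f := w ^ 3) (by rw [← pow_add, hu4]) (by rw [← pow_add, hw6])
    (by simpa using huv)
  have hz' : π ↑z⁻¹ = 1 := by
    have := congrArg π z.mul_inv
    rwa [map_mul, hz, one_mul, map_one] at this
  refine ⟨uhat, z * w * ↑z⁻¹, rfl, ?_, hu4, ?_, ?_⟩
  · rw [map_mul, map_mul, hz, hz', one_mul, mul_one]
  · rw [Units.conj_pow, hw6, mul_one, Units.mul_inv]
  · rw [Units.conj_pow, hconj]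
end

section
/- There is a group homomorphism from the projective modular group PSL₂(ℤ) = ℤ₂ ∗ ℤ₃, presented as ⟨s, t | s² = 1, t³ = 1⟩ (PresentedGroup), to the group of invertible n×n complex matrices, sending s to A and t to B, for every choice of the complex matrices S₁,…,S₆, T₁,…,T₆. -/
noncomputable section

open Matrix

/-- The primitive third root of unity `ρ = exp(2πi/3)`. -/
def ρ : ℂ := Complex.exp (2 * Real.pi * Complex.I / 3)

/-- The index set of the `6×6`-block matrices with block sizes `a 0, …, a 5`. -/
abbrev BIdx (a : Fin 6 → ℕ) := (i : Fin 6) × Fin (a i)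

/-- The `n×n` matrix with the block `M` in block position `(i, j)` and zeroes elsewhere. -/
def emb {a : Fin 6 → ℕ} (i j : Fin 6) (M : Matrix (Fin (a i)) (Fin (a j)) ℂ) :
    Matrix (BIdx a) (BIdx a) ℂ := fun p q =>
  if h : p.1 = i ∧ q.1 = j then
    M (Fin.cast (congrArg a h.1) p.2) (Fin.cast (congrArg a h.2) q.2)
  else 0

variable {a : Fin 6 → ℕ}

/-- The matrix `A`: diagonal blocks `(1, −1, 1, −1, 1, −1)` and off-diagonal blocks
`A₁₂ = iρS₁`, `A₁₆ = T₆`, `A₃₂ = T₂`, `A₃₄ = iρ²S₃`, `A₅₄ = T₄`, `A₅₆ = iS₅`. -/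
def Amat (S₁ : Matrix (Fin (a 0)) (Fin (a 1)) ℂ) (S₃ : Matrix (Fin (a 2)) (Fin (a 3)) ℂ)
    (S₅ : Matrix (Fin (a 4)) (Fin (a 5)) ℂ) (T₂ : Matrix (Fin (a 2)) (Fin (a 1)) ℂ)
    (T₄ : Matrix (Fin (a 4)) (Fin (a 3)) ℂ) (T₆ : Matrix (Fin (a 0)) (Fin (a 5)) ℂ) :
    Matrix (BIdx a) (BIdx a) ℂ :=
  emb 0 0 1 + emb 1 1 (-1) + emb 2 2 1 + emb 3 3 (-1) + emb 4 4 1 + emb 5 5 (-1) +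
    emb 0 1 ((Complex.I * ρ) • S₁) + emb 0 5 T₆ + emb 2 1 T₂ +
    emb 2 3 ((Complex.I * ρ ^ 2) • S₃) + emb 4 3 T₄ + emb 4 5 (Complex.I • S₅)

/-- The matrix `B`: diagonal blocks `(1, ρ, ρ², 1, ρ, ρ²)` and off-diagonal blocks
`B₂₁ = iT₁`, `B₂₃ = S₂`, `B₄₃ = iT₃`, `B₄₅ = ρS₄`, `B₆₁ = ρ²S₆`, `B₆₅ = iT₅`. -/
def Bmat (S₂ : Matrix (Fin (a 1)) (Fin (a 2)) ℂ) (S₄ : Matrix (Fin (a 3)) (Fin (a 4)) ℂ)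
    (S₆ : Matrix (Fin (a 5)) (Fin (a 0)) ℂ) (T₁ : Matrix (Fin (a 1)) (Fin (a 0)) ℂ)
    (T₃ : Matrix (Fin (a 3)) (Fin (a 2)) ℂ) (T₅ : Matrix (Fin (a 5)) (Fin (a 4)) ℂ) :
    Matrix (BIdx a) (BIdx a) ℂ :=
  emb 0 0 1 + emb 1 1 (ρ • 1) + emb 2 2 (ρ ^ 2 • 1) + emb 3 3 1 + emb 4 4 (ρ • 1) +
    emb 5 5 (ρ ^ 2 • 1) + emb 1 0 (Complex.I • T₁) + emb 1 2 S₂ +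
    emb 3 2 (Complex.I • T₃) + emb 3 4 (ρ • S₄) + emb 5 0 (ρ ^ 2 • S₆) +
    emb 5 4 (Complex.I • T₅)

/-- Relations of the projective modular group `PSL₂(ℤ) = ⟨s, t | s² = 1, t³ = 1⟩`,
with `s` encoded as `true` and `t` as `false`. -/
def psl2Rels : Set (FreeGroup Bool) :=
  {FreeGroup.of true ^ 2, FreeGroup.of false ^ 3}

/-!
Both `A` and `B` have the shape `D + N` with `D` diagonal, whose entries are `m`-th roots of
unity (`m = 2` for `A`, `m = 3` for `B`), and `N` supported on the blocks `(i, j)` with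
`dᵢ ≠ dⱼ` and satisfying `N p r * N r q = 0`. Any product with two factors `N` then vanishes,
so `(D + N)^m = D^m + M` where `M p q = (∑ₖ d_p^k d_q^(m-1-k)) N p q`; the geometric sum is
`(d_p^m - d_q^m)/(d_p - d_q) = 0` wherever `N p q ≠ 0`. Hence `A² = 1` and `B³ = 1`, which are
the defining relations of `⟨s, t | s² = 1, t³ = 1⟩`.
-/

open Finset

section DiagonalAddSquareZero

variable {ι R : Type*} [Fintype ι] [DecidableEq ι] [CommRing R]

theorem Matrix.diagonal_add_pow_eq_of_mul_apply_eq_zero (d : ι → R) (Y : Matrix ι ι R)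
    (hY : ∀ p r q, Y p r * Y r q = 0) (n : ℕ) :
    (diagonal d + Y) ^ n = diagonal (d ^ n) +
      of fun p q => (∑ i ∈ range n, d p ^ i * d q ^ (n - 1 - i)) * Y p q := by
  induction n with
  | zero => ext; simp
  | succ n ih =>
    have hZY : (of fun p q => (∑ i ∈ range n, d p ^ i * d q ^ (n - 1 - i)) * Y p q) * Y = 0 := by
      ext p q
      simp [mul_apply, mul_assoc, hY]
    ext p q
    rw [pow_succ, ih, add_mul, mul_add, mul_add, hZY, add_zero, diagonal_mul_diagonal]
    simp only [add_apply, diagonal_mul, mul_diagonal, of_apply, geom_sum₂_succ_eq,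
      Nat.add_sub_cancel, diagonal_apply, Pi.mul_apply, Pi.pow_apply, pow_succ]
    split_ifs <;> ring

theorem Matrix.diagonal_add_pow_eq_one [IsDomain R] {n : ℕ} {d : ι → R} {Y : Matrix ι ι R}
    (hd : ∀ i, d i ^ n = 1) (hdY : ∀ p q, Y p q ≠ 0 → d p ≠ d q)
    (hY : ∀ p r q, Y p r * Y r q = 0) :
    (diagonal d + Y) ^ n = 1 := by
  rw [diagonal_add_pow_eq_of_mul_apply_eq_zero d Y hY, show d ^ n = fun _ => 1 from funext hd,
    diagonal_one, add_eq_left]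
  ext p q
  by_cases hpq : Y p q = 0
  · simp [hpq]
  have hsum := geom_sum₂_mul (d p) (d q) n
  rw [hd, hd, sub_self, mul_eq_zero, sub_eq_zero] at hsum
  simp [hsum.resolve_right (hdY p q hpq)]

theorem IsPrimitiveRoot.diagonal_add_pow_eq_one {ζ : R} {m : ℕ} [IsDomain R]
    (hζ : IsPrimitiveRoot ζ m) {k : ι → ℕ} (hk : ∀ i, k i < m) {Y : Matrix ι ι R}
    (hkY : ∀ p q, Y p q ≠ 0 → k p ≠ k q) (hY : ∀ p r q, Y p r * Y r q = 0) :
    (diagonal (fun i => ζ ^ k i) + Y) ^ m = 1 :=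
  Matrix.diagonal_add_pow_eq_one (fun i => by rw [pow_right_comm, hζ.pow_eq_one, one_pow])
    (fun p q hpq h => hkY p q hpq (hζ.pow_inj (hk p) (hk q) h)) hY

end DiagonalAddSquareZero

theorem isPrimitiveRoot_ρ : IsPrimitiveRoot ρ 3 := by
  simpa [ρ] using Complex.isPrimitiveRoot_exp 3 (by norm_num)

def AmatOffDiag (S₁ : Matrix (Fin (a 0)) (Fin (a 1)) ℂ) (S₃ : Matrix (Fin (a 2)) (Fin (a 3)) ℂ)
    (S₅ : Matrix (Fin (a 4)) (Fin (a 5)) ℂ) (T₂ : Matrix (Fin (a 2)) (Fin (a 1)) ℂ)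
    (T₄ : Matrix (Fin (a 4)) (Fin (a 3)) ℂ) (T₆ : Matrix (Fin (a 0)) (Fin (a 5)) ℂ) :
    Matrix (BIdx a) (BIdx a) ℂ :=
  emb 0 1 ((Complex.I * ρ) • S₁) + emb 0 5 T₆ + emb 2 1 T₂ +
    emb 2 3 ((Complex.I * ρ ^ 2) • S₃) + emb 4 3 T₄ + emb 4 5 (Complex.I • S₅)

section AmatDecomposition

variable (S₁ : Matrix (Fin (a 0)) (Fin (a 1)) ℂ) (S₃ : Matrix (Fin (a 2)) (Fin (a 3)) ℂ)
    (S₅ : Matrix (Fin (a 4)) (Fin (a 5)) ℂ) (T₂ : Matrix (Fin (a 2)) (Fin (a 1)) ℂ)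
    (T₄ : Matrix (Fin (a 4)) (Fin (a 3)) ℂ) (T₆ : Matrix (Fin (a 0)) (Fin (a 5)) ℂ)

theorem Amat_eq_diagonal_add : Amat S₁ S₃ S₅ T₂ T₄ T₆ =
    diagonal (fun p => (-1) ^ ![0, 1, 0, 1, 0, 1] p.1) + AmatOffDiag S₁ S₃ S₅ T₂ T₄ T₆ := by
  ext ⟨i, x⟩ ⟨j, y⟩
  fin_cases i <;> fin_cases j <;> simp [Amat, AmatOffDiag, emb, diagonal, one_apply, apply_ite]

theorem AmatOffDiag_apply_ne_zero (p q : BIdx a) (h : AmatOffDiag S₁ S₃ S₅ T₂ T₄ T₆ p q ≠ 0) :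
    ![0, 1, 0, 1, 0, 1] p.1 ≠ ![0, 1, 0, 1, 0, 1] q.1 := by
  obtain ⟨i, x⟩ := p
  obtain ⟨j, y⟩ := q
  fin_cases i <;> fin_cases j <;> simp_all [AmatOffDiag, emb]

theorem AmatOffDiag_mul_apply (p r q : BIdx a) :
    AmatOffDiag S₁ S₃ S₅ T₂ T₄ T₆ p r * AmatOffDiag S₁ S₃ S₅ T₂ T₄ T₆ r q = 0 := by
  obtain ⟨j, y⟩ := r
  fin_cases j <;> simp [AmatOffDiag, emb]

theorem Amat_sq : Amat S₁ S₃ S₅ T₂ T₄ T₆ ^ 2 = 1 := by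
  have hk : ∀ p : BIdx a, ![0, 1, 0, 1, 0, 1] p.1 < 2 :=
    fun p => (show ∀ i : Fin 6, ![0, 1, 0, 1, 0, 1] i < 2 by decide) p.1
  rw [Amat_eq_diagonal_add]
  exact (IsPrimitiveRoot.neg_one (R := ℂ) 0 (by decide)).diagonal_add_pow_eq_one hk
    (AmatOffDiag_apply_ne_zero S₁ S₃ S₅ T₂ T₄ T₆) (AmatOffDiag_mul_apply S₁ S₃ S₅ T₂ T₄ T₆)

end AmatDecomposition

def BmatOffDiag (S₂ : Matrix (Fin (a 1)) (Fin (a 2)) ℂ) (S₄ : Matrix (Fin (a 3)) (Fin (a 4)) ℂ)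
    (S₆ : Matrix (Fin (a 5)) (Fin (a 0)) ℂ) (T₁ : Matrix (Fin (a 1)) (Fin (a 0)) ℂ)
    (T₃ : Matrix (Fin (a 3)) (Fin (a 2)) ℂ) (T₅ : Matrix (Fin (a 5)) (Fin (a 4)) ℂ) :
    Matrix (BIdx a) (BIdx a) ℂ :=
  emb 1 0 (Complex.I • T₁) + emb 1 2 S₂ + emb 3 2 (Complex.I • T₃) + emb 3 4 (ρ • S₄) +
    emb 5 0 (ρ ^ 2 • S₆) + emb 5 4 (Complex.I • T₅)

section BmatDecomposition

variable (S₂ : Matrix (Fin (a 1)) (Fin (a 2)) ℂ) (S₄ : Matrix (Fin (a 3)) (Fin (a 4)) ℂ)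
    (S₆ : Matrix (Fin (a 5)) (Fin (a 0)) ℂ) (T₁ : Matrix (Fin (a 1)) (Fin (a 0)) ℂ)
    (T₃ : Matrix (Fin (a 3)) (Fin (a 2)) ℂ) (T₅ : Matrix (Fin (a 5)) (Fin (a 4)) ℂ)

theorem Bmat_eq_diagonal_add : Bmat S₂ S₄ S₆ T₁ T₃ T₅ =
    diagonal (fun p => ρ ^ ![0, 1, 2, 0, 1, 2] p.1) + BmatOffDiag S₂ S₄ S₆ T₁ T₃ T₅ := by
  ext ⟨i, x⟩ ⟨j, y⟩
  fin_cases i <;> fin_cases j <;> simp [Bmat, BmatOffDiag, emb, diagonal, one_apply]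

theorem BmatOffDiag_apply_ne_zero (p q : BIdx a) (h : BmatOffDiag S₂ S₄ S₆ T₁ T₃ T₅ p q ≠ 0) :
    ![0, 1, 2, 0, 1, 2] p.1 ≠ ![0, 1, 2, 0, 1, 2] q.1 := by
  obtain ⟨i, x⟩ := p
  obtain ⟨j, y⟩ := q
  fin_cases i <;> fin_cases j <;> simp_all [BmatOffDiag, emb]

theorem BmatOffDiag_mul_apply (p r q : BIdx a) :
    BmatOffDiag S₂ S₄ S₆ T₁ T₃ T₅ p r * BmatOffDiag S₂ S₄ S₆ T₁ T₃ T₅ r q = 0 := by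
  obtain ⟨j, y⟩ := r
  fin_cases j <;> simp [BmatOffDiag, emb]

theorem Bmat_pow_three : Bmat S₂ S₄ S₆ T₁ T₃ T₅ ^ 3 = 1 := by
  have hk : ∀ p : BIdx a, ![0, 1, 2, 0, 1, 2] p.1 < 3 :=
    fun p => (show ∀ i : Fin 6, ![0, 1, 2, 0, 1, 2] i < 3 by decide) p.1
  rw [Bmat_eq_diagonal_add]
  exact isPrimitiveRoot_ρ.diagonal_add_pow_eq_one hk
    (BmatOffDiag_apply_ne_zero S₂ S₄ S₆ T₁ T₃ T₅) (BmatOffDiag_mul_apply S₂ S₄ S₆ T₁ T₃ T₅)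

end BmatDecomposition

theorem exists_psl2Rels_hom_of_sq_eq_one_of_pow_three_eq_one {M : Type*} [Monoid M] {x y : M}
    (hx : x ^ 2 = 1) (hy : y ^ 3 = 1) :
    ∃ φ : PresentedGroup psl2Rels →* Mˣ,
      (φ (PresentedGroup.of true) : M) = x ∧ (φ (PresentedGroup.of false) : M) = y := by
  let u : Bool → Mˣ := fun b =>
    cond b (Units.ofPowEqOne x 2 hx two_ne_zero) (Units.ofPowEqOne y 3 hy three_ne_zero)
  have hu : ∀ r ∈ psl2Rels, FreeGroup.lift u r = 1 := by
    rintro r (rfl | rfl) <;> simp [u]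
  exact ⟨PresentedGroup.toGroup hu, by simp [u], by simp [u]⟩

/-- For every choice of the matrices `S₁,…,S₆, T₁,…,T₆` there is a group homomorphism
from `PSL₂(ℤ) = ⟨s, t | s² = 1, t³ = 1⟩` to the invertible `n×n` complex matrices
sending `s ↦ A` and `t ↦ B`. -/
theorem psl2z_representation (a : Fin 6 → ℕ)
    (S₁ : Matrix (Fin (a 0)) (Fin (a 1)) ℂ) (S₂ : Matrix (Fin (a 1)) (Fin (a 2)) ℂ)
    (S₃ : Matrix (Fin (a 2)) (Fin (a 3)) ℂ) (S₄ : Matrix (Fin (a 3)) (Fin (a 4)) ℂ)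
    (S₅ : Matrix (Fin (a 4)) (Fin (a 5)) ℂ) (S₆ : Matrix (Fin (a 5)) (Fin (a 0)) ℂ)
    (T₁ : Matrix (Fin (a 1)) (Fin (a 0)) ℂ) (T₂ : Matrix (Fin (a 2)) (Fin (a 1)) ℂ)
    (T₃ : Matrix (Fin (a 3)) (Fin (a 2)) ℂ) (T₄ : Matrix (Fin (a 4)) (Fin (a 3)) ℂ)
    (T₅ : Matrix (Fin (a 5)) (Fin (a 4)) ℂ) (T₆ : Matrix (Fin (a 0)) (Fin (a 5)) ℂ) :
    ∃ φ : PresentedGroup psl2Rels →* (Matrix (BIdx a) (BIdx a) ℂ)ˣ,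
      (φ (PresentedGroup.of true) : Matrix (BIdx a) (BIdx a) ℂ) = Amat S₁ S₃ S₅ T₂ T₄ T₆ ∧
      (φ (PresentedGroup.of false) : Matrix (BIdx a) (BIdx a) ℂ) = Bmat S₂ S₄ S₆ T₁ T₃ T₅ :=
  exists_psl2Rels_hom_of_sq_eq_one_of_pow_three_eq_one (Amat_sq ..) (Bmat_pow_three ..)
end
end
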